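/- arXiv:2101.12452 — 3 statements merged into one kernel-verified Lean document; each statement's English description precedes it below -/
import Mathlib

section
/- Let A be a commutative Noetherian local ring and let I ⊆ A[X] be an ideal such that the quotient ring A[X]/I is a finitely generated flat A-module. Then there exists a unique monic polynomial P ∈ A[X] such that I is the ideal generated by P. -/
/-!
Over a local ring, the finite flat module `B = A[X] ⧸ I` is free, say of rank `d`. By
Cayley–Hamilton the characteristic polynomial `P` of multiplication by the class of `X` on `B`
lies in `I`. It is monic of degree `d`, so `A[X] ⧸ (P)` is free of rank `d` and surjects onto `B`;
a surjection between free modules of the same finite rank is bijective, whence `(P) = I`.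
Two monic generators of one principal ideal differ by a unit which is itself monic, hence `1`.
-/

open Polynomial

theorem Ideal.eq_of_le_of_finrank_quotient_le {R S : Type*} [CommRing R] [CommRing S]
    [Algebra R S] {J I : Ideal S} (hJI : J ≤ I) [Module.Finite R (S ⧸ J)]
    [Module.Free R (S ⧸ J)] [Module.Free R (S ⧸ I)]
    (h : Module.finrank R (S ⧸ J) ≤ Module.finrank R (S ⧸ I)) : J = I := by
  let q := (Ideal.Quotient.factorₐ R hJI).toLinearMap
  have hq : Function.Surjective q := Ideal.Quotient.factor_surjective hJI
  have : Module.Finite R (S ⧸ I) := .of_surjective q hq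
  have hinj := (OrzechProperty.bijective_of_surjective_of_finrank_le q hq h).injective
  refine le_antisymm hJI fun s hs => ?_
  rw [← Ideal.Quotient.eq_zero_iff_mem]
  exact hinj (by simpa [q, Ideal.Quotient.eq_zero_iff_mem] using hs)

theorem Polynomial.Monic.eq_of_span_singleton_eq {R : Type*} [CommRing R] {p q : R[X]}
    (hp : p.Monic) (hq : q.Monic) (h : Ideal.span {p} = Ideal.span {q}) : p = q := by
  obtain ⟨c, rfl⟩ := Ideal.mem_span_singleton'.mp (h ▸ Ideal.mem_span_singleton_self q)
  obtain ⟨e, he⟩ := Ideal.mem_span_singleton'.mp (h.symm ▸ Ideal.mem_span_singleton_self p)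
  have hce : c * e = 1 := hp.isRegular.right (by linear_combination he)
  exact eq_of_monic_of_associated hp hq ⟨Units.mkOfMulEqOne c e hce, by simp [mul_comm]⟩

section CharpolyOfX

variable {R : Type*} [CommRing R] (I : Ideal R[X]) [Module.Free R (R[X] ⧸ I)]
  [Module.Finite R (R[X] ⧸ I)]

theorem Ideal.charpoly_lmul_mk_X_mem :
    (Algebra.lmul R (R[X] ⧸ I) (Ideal.Quotient.mk I X)).charpoly ∈ I := by
  set P := (Algebra.lmul R (R[X] ⧸ I) (Ideal.Quotient.mk I X)).charpoly
  rw [← Ideal.Quotient.eq_zero_iff_mem, ← Algebra.aeval_self_charpoly_lmul (R := R)]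
  conv_lhs => rw [← Ideal.Quotient.mkₐ_eq_mk R, ← aeval_X_left_apply P, ← aeval_algHom_apply]
  rfl

theorem Ideal.eq_span_charpoly_lmul_mk_X [Nontrivial R] :
    I = Ideal.span {(Algebra.lmul R (R[X] ⧸ I) (Ideal.Quotient.mk I X)).charpoly} := by
  set P := (Algebra.lmul R (R[X] ⧸ I) (Ideal.Quotient.mk I X)).charpoly
  have hPm : P.Monic := LinearMap.charpoly_monic _
  have := hPm.free_quotient
  have := hPm.finite_quotient
  refine (Ideal.eq_of_le_of_finrank_quotient_le (R := R)
    ((Ideal.span_singleton_le_iff_mem _).mpr (I.charpoly_lmul_mk_X_mem)) ?_).symm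
  rw [finrank_quotient_span_eq_natDegree' hPm, LinearMap.charpoly_natDegree]

end CharpolyOfX

theorem exists_unique_monic_generator_general {A : Type*} [CommRing A]
    [IsLocalRing A] (I : Ideal (Polynomial A))
    (hfin : Module.Finite A (Polynomial A ⧸ I))
    (hflat : Module.Flat A (Polynomial A ⧸ I)) :
    ∃! P : Polynomial A, P.Monic ∧ I = Ideal.span {P} := by
  have : Module.Free A (A[X] ⧸ I) := Module.free_of_flat_of_isLocalRing
  refine ⟨_, ⟨LinearMap.charpoly_monic _, I.eq_span_charpoly_lmul_mk_X⟩, fun Q hQ => ?_⟩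
  exact hQ.1.eq_of_span_singleton_eq (LinearMap.charpoly_monic _)
    (hQ.2.symm.trans I.eq_span_charpoly_lmul_mk_X)

/-- Let `A` be a commutative Noetherian local ring and let `I ⊆ A[X]` be an ideal such that
the quotient ring `A[X]/I` is a finitely generated flat `A`-module. Then there exists a unique
monic polynomial `P ∈ A[X]` such that `I` is the ideal generated by `P`. -/
theorem exists_unique_monic_generator {A : Type*} [CommRing A] [IsNoetherianRing A]
    [IsLocalRing A] (I : Ideal (Polynomial A))
    (hfin : Module.Finite A (Polynomial A ⧸ I))
    (hflat : Module.Flat A (Polynomial A ⧸ I)) :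
    ∃! P : Polynomial A, P.Monic ∧ I = Ideal.span {P} :=
  exists_unique_monic_generator_general I hfin hflat
end

section
/- Let A be a nontrivial commutative ring and let P ∈ A[X] be a monic polynomial of degree n ≥ 1. If the polynomial P(X+Y) ∈ A[X,Y] lies in the ideal of A[X,Y] generated by P(X) and P(Y), then P(X+Y) = P(X) + P(Y) in A[X,Y]. -/
/-!
Let `Q = P(X+Y) - P(X) - P(Y)`. It lies in the ideal `(P(X), P(Y))`, and it has degree `< deg P`
in each variable: the Taylor coefficients of `P(X+Y)` in `Y` are the Hasse derivatives of `P(X)`,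
and monicity cancels the top terms. Viewing `A[X,Y]` as `A[X][Y]` and reducing modulo the monic
`P(Y)` turns `Q = a P(X) + b P(Y)` into `Q = P(X) • (a mod P(Y))`; every coefficient of `Q` is
then a multiple of the monic `P(X)` of smaller degree, hence zero.
-/

namespace Polynomial

theorem hasseDeriv_map {R S : Type*} [Semiring R] [Semiring S] (f : R →+* S) (k : ℕ)
    (p : R[X]) : hasseDeriv k (p.map f) = (hasseDeriv k p).map f := by
  ext i
  simp [hasseDeriv_coeff]

variable {R : Type*} [CommRing R]

theorem eq_zero_of_mem_span_C_of_degree_lt [Nontrivial R] {p : R[X]} {q : R[X][X]}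
    (hp : p.Monic) (hq : q.Monic) {f : R[X][X]} (hf : f ∈ Ideal.span {C p, q})
    (hfq : f.degree < q.degree) (hfp : ∀ k, (f.coeff k).degree < p.degree) : f = 0 := by
  obtain ⟨a, b, rfl⟩ := Ideal.mem_span_pair.mp hf
  have hmod : a * C p + b * q = p • (a %ₘ q) := by
    rw [← (modByMonic_eq_self_iff hq).2 hfq, add_modByMonic, mul_self_modByMonic hq,
      add_zero, mul_comm, C_mul', smul_modByMonic]
  refine Polynomial.ext fun k => ?_
  rw [coeff_zero, ← (modByMonic_eq_self_iff hp).2 (hfp k), modByMonic_eq_zero_iff_dvd hp, hmod,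
    coeff_smul, smul_eq_mul]
  exact dvd_mul_right _ _

theorem aeval_C_X (P : R[X]) : aeval (C X : R[X][X]) P = C P := by
  simpa using aeval_algHom_apply (CAlgHom : R[X] →ₐ[R] R[X][X]) X P

theorem aeval_X_add_C_X (P : R[X]) : aeval (X + C X : R[X][X]) P = taylor X (P.map C) := by
  rw [taylor_apply, comp_eq_aeval, ← aeval_map_algebraMap R[X], algebraMap_eq]

theorem coeff_taylor_X_map_C (P : R[X]) (k : ℕ) :
    (taylor X (P.map C)).coeff k = hasseDeriv k P := by
  rw [taylor_coeff, hasseDeriv_map, eval_map, eval₂_C_X]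

theorem degree_taylor_sub_lt {f : R[X]} (hf : f ≠ 0) (r : R) :
    (taylor r f - f).degree < f.degree :=
  degree_sub_lt_left (degree_taylor f r) ((taylor_eq_zero r f).not.2 hf) (leadingCoeff_taylor r f)
    |>.trans_eq (degree_taylor f r)

theorem degree_hasseDeriv_lt {P : R[X]} (hP : 0 < P.natDegree) {k : ℕ} (hk : 0 < k) :
    (hasseDeriv k P).degree < P.degree :=
  degree_lt_degree ((natDegree_hasseDeriv_le P k).trans_lt (Nat.sub_lt hP hk))

theorem degree_coeff_taylor_X_sub_lt {P : R[X]} (hdeg : 0 < P.natDegree) (k : ℕ) :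
    ((taylor X (P.map C) - (C P + P.map C)).coeff k).degree < P.degree := by
  have hC : ∀ a : R, (C a).degree < P.degree := fun a => degree_lt_degree (by rwa [natDegree_C])
  rw [coeff_sub, coeff_add, coeff_taylor_X_map_C, coeff_map, coeff_C]
  rcases Nat.eq_zero_or_pos k with rfl | hk
  · simpa [hasseDeriv_zero'] using hC (P.coeff 0)
  · rw [if_neg hk.ne', zero_add]
    exact (degree_sub_le _ _).trans_lt (max_lt (degree_hasseDeriv_lt hdeg hk) (hC _))

theorem degree_taylor_X_sub_lt {P : R[X]} (hdeg : 0 < P.natDegree) :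
    (taylor X (P.map C) - (C P + P.map C)).degree < (P.map C).degree := by
  rw [sub_add_eq_sub_sub_swap]
  refine (degree_sub_le _ _).trans_lt (max_lt (degree_taylor_sub_lt ?_ X) ?_)
  · exact (Polynomial.map_ne_zero_iff C_injective).2 (ne_zero_of_natDegree_gt hdeg)
  · exact degree_lt_degree (by rwa [natDegree_C, natDegree_map_eq_of_injective C_injective])

end Polynomial

/-- Let `A` be a nontrivial commutative ring and let `P ∈ A[X]` be a monic polynomial of
degree `n ≥ 1`. If the polynomial `P(X+Y) ∈ A[X,Y]` lies in the ideal of `A[X,Y]` generated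
by `P(X)` and `P(Y)`, then `P(X+Y) = P(X) + P(Y)` in `A[X,Y]`. -/
theorem additive_of_mem_span {A : Type*} [CommRing A] [Nontrivial A]
    {P : Polynomial A} (hP : P.Monic) (hdeg : 1 ≤ P.natDegree)
    (h : Polynomial.aeval (MvPolynomial.X 0 + MvPolynomial.X 1 : MvPolynomial (Fin 2) A) P ∈
      Ideal.span {Polynomial.aeval (MvPolynomial.X 0 : MvPolynomial (Fin 2) A) P,
        Polynomial.aeval (MvPolynomial.X 1 : MvPolynomial (Fin 2) A) P}) :
    Polynomial.aeval (MvPolynomial.X 0 + MvPolynomial.X 1 : MvPolynomial (Fin 2) A) P =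
      Polynomial.aeval (MvPolynomial.X 0 : MvPolynomial (Fin 2) A) P +
        Polynomial.aeval (MvPolynomial.X 1 : MvPolynomial (Fin 2) A) P := by
  set e := (Polynomial.Bivariate.equivMvPolynomial A).symm
  have he : ∀ x, e (Polynomial.aeval x P) = Polynomial.aeval (e x) P := fun x =>
    (Polynomial.aeval_algHom_apply e.toAlgHom x P).symm
  have hX0 : e (Polynomial.aeval (MvPolynomial.X 0) P) = Polynomial.C P := by
    rw [he]; simp [e, Polynomial.aeval_C_X]
  have hX1 : e (Polynomial.aeval (MvPolynomial.X 1) P) = P.map Polynomial.C := by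
    rw [he]; simp [e, Polynomial.aeval_X_left_eq_map]
  have hX01 : e (Polynomial.aeval (MvPolynomial.X 0 + MvPolynomial.X 1) P) =
      Polynomial.taylor Polynomial.X (P.map Polynomial.C) := by
    rw [he]; simp [e, add_comm, Polynomial.aeval_X_add_C_X]
  have hmem := Ideal.mem_map_of_mem e h
  rw [Ideal.map_span, Set.image_pair, hX0, hX1, hX01] at hmem
  apply e.injective
  rw [map_add, hX0, hX1, hX01, ← sub_eq_zero]
  refine Polynomial.eq_zero_of_mem_span_C_of_degree_lt hP (hP.map _) ?_
    (Polynomial.degree_taylor_X_sub_lt hdeg) (Polynomial.degree_coeff_taylor_X_sub_lt hdeg)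
  exact sub_mem hmem (add_mem (Ideal.subset_span (by simp)) (Ideal.subset_span (by simp)))
end

section
/- Let p be a prime number and let n ≥ 2 be a natural number that is not a power of p. Then there exists an index i with 0 < i < n such that p does not divide the binomial coefficient C(n, i). -/
/-- Let `p` be a prime number and let `n ≥ 2` be a natural number that is not a power of `p`.
Then there exists an index `i` with `0 < i < n` such that `p` does not divide the binomial
coefficient `C(n, i)`. -/
theorem exists_choose_not_dvd {p n : ℕ} (hp : p.Prime) (hn : 2 ≤ n)
    (h : ∀ m : ℕ, n ≠ p ^ m) :
    ∃ i : ℕ, 0 < i ∧ i < n ∧ ¬ p ∣ n.choose i := by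
  have : Fact p.Prime := ⟨hp⟩
  by_contra! hdvd
  refine h _ (Choose.eq_pow_multiplicity_of_choose_modEq_zero_nat (by omega) fun i hi => ?_)
  obtain ⟨hi₁, hi₂⟩ := Finset.mem_Icc.mp hi
  exact Nat.modEq_zero_iff_dvd.mpr (hdvd i hi₁ (by omega))
end
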